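/- For every q ∈ (0,1), let F_q : [0,1] → ℝ be the unique continuous solution of F_q(y) = q·F_q(y/(1−q)) on [0,1−q] and F_q(y) = q + (1−q)·F_q((y−(1−q))/q) on [1−q,1]. Then there exists a unique continuous function T_q : [0,1] → ℝ satisfying the generalized Takagi equation T_q(y) = 2(1−q)·F_q(y) + q·T_q(y/(1−q)) for y ∈ [0,1−q] and T_q(y) = 2q·(1 − F_q(y)) + (1−q)·T_q((y−(1−q))/q) for y ∈ [1−q,1]; moreover the family satisfies the symmetry T_q(y) = T_{1−q}(1−y) for all y ∈ [0,1]. -/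

import Mathlib

/-- `F` satisfies the functional equations of the cumulative function of the stationary
state of the reversible dissipative dyadic multi-baker map with parameter `q`:
`F(y) = q F(y/(1-q))` on `[0, 1-q]` and `F(y) = q + (1-q) F((y-(1-q))/q)` on `[1-q, 1]`. -/
def IsStationaryCumulative (q : ℝ) (F : C(Set.Icc (0 : ℝ) 1, ℝ)) : Prop :=
  (∀ (y : ℝ) (h1 : y ∈ Set.Icc (0 : ℝ) 1) (_ : y ≤ 1 - q)
      (h2 : y / (1 - q) ∈ Set.Icc (0 : ℝ) 1),
    F ⟨y, h1⟩ = q * F ⟨y / (1 - q), h2⟩) ∧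
  (∀ (y : ℝ) (h1 : y ∈ Set.Icc (0 : ℝ) 1) (_ : 1 - q ≤ y)
      (h2 : (y - (1 - q)) / q ∈ Set.Icc (0 : ℝ) 1),
    F ⟨y, h1⟩ = q + (1 - q) * F ⟨(y - (1 - q)) / q, h2⟩)

/-- `T` satisfies the generalized Takagi equations with parameter `q` and stationary
cumulative function `F`:
`T(y) = 2(1-q) F(y) + q T(y/(1-q))` on `[0, 1-q]` and
`T(y) = 2q (1 - F(y)) + (1-q) T((y-(1-q))/q)` on `[1-q, 1]`. -/
def IsGenTakagi (q : ℝ) (F T : C(Set.Icc (0 : ℝ) 1, ℝ)) : Prop :=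
  (∀ (y : ℝ) (h1 : y ∈ Set.Icc (0 : ℝ) 1) (_ : y ≤ 1 - q)
      (h2 : y / (1 - q) ∈ Set.Icc (0 : ℝ) 1),
    T ⟨y, h1⟩ = 2 * (1 - q) * F ⟨y, h1⟩ + q * T ⟨y / (1 - q), h2⟩) ∧
  (∀ (y : ℝ) (h1 : y ∈ Set.Icc (0 : ℝ) 1) (_ : 1 - q ≤ y)
      (h2 : (y - (1 - q)) / q ∈ Set.Icc (0 : ℝ) 1),
    T ⟨y, h1⟩ = 2 * q * (1 - F ⟨y, h1⟩) + (1 - q) * T ⟨(y - (1 - q)) / q, h2⟩)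

private abbrev II : Set ℝ := Set.Icc 0 1

private lemma happ (F : C(II, ℝ)) {a b : ℝ} (ha : a ∈ II) (hb : b ∈ II) (h : a = b) :
    F ⟨a, ha⟩ = F ⟨b, hb⟩ := by subst h; rfl

private lemma mem_div1 {q y : ℝ} (hq1 : q < 1) (h1 : y ∈ II) (hle : y ≤ 1 - q) :
    y / (1 - q) ∈ II := by
  have h1q : (0:ℝ) < 1 - q := by linarith
  exact ⟨div_nonneg h1.1 h1q.le, (div_le_one h1q).mpr hle⟩

private lemma mem_div2 {q y : ℝ} (hq : 0 < q) (h1 : y ∈ II) (hge : 1 - q ≤ y) :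
    (y - (1 - q)) / q ∈ II := by
  refine ⟨div_nonneg (by linarith) hq.le, ?_⟩
  rw [div_le_one hq]; linarith [h1.2]

private lemma mem_refl {y : ℝ} (h : y ∈ II) : 1 - y ∈ II :=
  ⟨by linarith [h.2], by linarith [h.1]⟩

/-- The core contraction-based uniqueness argument. -/
private lemma contract_zero {c : ℝ} (hc0 : 0 ≤ c) (hc : c < 1) (D : C(II, ℝ))
    (h : ∀ x : II, ∃ z : II, |D x| ≤ c * |D z|) : ∀ x, D x = 0 := by
  have hne : (Set.univ : Set (↥II)).Nonempty := ⟨⟨0, by norm_num⟩, trivial⟩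
  obtain ⟨x0, -, hx0⟩ := isCompact_univ.exists_isMaxOn hne
    ((continuous_abs.comp D.continuous).continuousOn (s := Set.univ))
  have hx0' : ∀ y : II, |D y| ≤ |D x0| := fun y => hx0 (Set.mem_univ y)
  obtain ⟨z, hz⟩ := h x0
  have h1 : |D x0| ≤ c * |D x0| := hz.trans (mul_le_mul_of_nonneg_left (hx0' z) hc0)
  have h0 : |D x0| ≤ 0 := by nlinarith [abs_nonneg (D x0)]
  intro x
  exact abs_eq_zero.mp (le_antisymm ((hx0' x).trans h0) (abs_nonneg _))

/-- Two solutions of the same inhomogeneous self-similarity equations agree. -/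
private lemma solutions_eq {q : ℝ} (hq : 0 < q) (hq1 : q < 1) (T T' : C(II, ℝ))
    (e1 : ∀ (y : ℝ) (h1 : y ∈ II) (_ : y ≤ 1 - q) (h2 : y / (1 - q) ∈ II),
      T ⟨y, h1⟩ - T' ⟨y, h1⟩ = q * (T ⟨y / (1 - q), h2⟩ - T' ⟨y / (1 - q), h2⟩))
    (e2 : ∀ (y : ℝ) (h1 : y ∈ II) (_ : 1 - q ≤ y) (h2 : (y - (1 - q)) / q ∈ II),
      T ⟨y, h1⟩ - T' ⟨y, h1⟩
        = (1 - q) * (T ⟨(y - (1 - q)) / q, h2⟩ - T' ⟨(y - (1 - q)) / q, h2⟩)) :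
    T = T' := by
  have h1q : (0:ℝ) < 1 - q := by linarith
  have hc0 : (0:ℝ) ≤ max q (1 - q) := le_trans hq.le (le_max_left _ _)
  have hc : max q (1 - q) < 1 := max_lt hq1 (by linarith)
  have key : ∀ x : II, ∃ z : II, |(T - T') x| ≤ max q (1 - q) * |(T - T') z| := by
    rintro ⟨y, hy⟩
    by_cases hle : y ≤ 1 - q
    · have h2 := mem_div1 hq1 hy hle
      refine ⟨⟨y / (1 - q), h2⟩, ?_⟩
      simp only [ContinuousMap.sub_apply]
      rw [e1 y hy hle h2, abs_mul, abs_of_pos hq]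
      exact mul_le_mul_of_nonneg_right (le_max_left _ _) (abs_nonneg _)
    · have hge : 1 - q ≤ y := le_of_not_ge hle
      have h2 := mem_div2 hq hy hge
      refine ⟨⟨(y - (1 - q)) / q, h2⟩, ?_⟩
      simp only [ContinuousMap.sub_apply]
      rw [e2 y hy hge h2, abs_mul, abs_of_pos h1q]
      exact mul_le_mul_of_nonneg_right (le_max_right _ _) (abs_nonneg _)
  have hz := contract_zero hc0 hc (T - T') key
  ext x
  have := hz x
  simp only [ContinuousMap.sub_apply] at this
  linarith

private lemma stationary_unique {q : ℝ} (hq : 0 < q) (hq1 : q < 1) {F F' : C(II, ℝ)}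
    (hF : IsStationaryCumulative q F) (hF' : IsStationaryCumulative q F') : F = F' := by
  refine solutions_eq hq hq1 F F' (fun y h1 hle h2 => ?_) (fun y h1 hge h2 => ?_)
  · rw [hF.1 y h1 hle h2, hF'.1 y h1 hle h2]; ring
  · rw [hF.2 y h1 hge h2, hF'.2 y h1 hge h2]; ring

private lemma genTakagi_unique {q : ℝ} (hq : 0 < q) (hq1 : q < 1) {F T T' : C(II, ℝ)}
    (hT : IsGenTakagi q F T) (hT' : IsGenTakagi q F T') : T = T' := by
  refine solutions_eq hq hq1 T T' (fun y h1 hle h2 => ?_) (fun y h1 hge h2 => ?_)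
  · rw [hT.1 y h1 hle h2, hT'.1 y h1 hle h2]; ring
  · rw [hT.2 y h1 hge h2, hT'.2 y h1 hge h2]; ring

private lemma m0 : (0:ℝ) ∈ II := by norm_num
private lemma m1 : (1:ℝ) ∈ II := by norm_num

private lemma F_one {q : ℝ} (hq : 0 < q) (hq1 : q < 1) {F : C(II, ℝ)}
    (hF : IsStationaryCumulative q F) : F ⟨1, m1⟩ = 1 := by
  have heq : (1 - (1 - q)) / q = 1 := by field_simp; ring
  have h2 : (1 - (1 - q)) / q ∈ II := by rw [heq]; exact m1
  have e := hF.2 1 m1 (by linarith) h2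
  rw [happ F h2 m1 heq] at e
  have : q * F ⟨1, m1⟩ = q * 1 := by nlinarith [e]
  exact mul_left_cancel₀ hq.ne' this

private lemma F_zero {q : ℝ} (hq : 0 < q) (hq1 : q < 1) {F : C(II, ℝ)}
    (hF : IsStationaryCumulative q F) : F ⟨0, m0⟩ = 0 := by
  have h1q : (0:ℝ) < 1 - q := by linarith
  have heq : (0:ℝ) / (1 - q) = 0 := zero_div _
  have h2 : (0:ℝ) / (1 - q) ∈ II := by rw [heq]; exact m0
  have e := hF.1 0 m0 (by linarith) h2
  rw [happ F h2 m0 heq] at e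
  nlinarith [e]

private lemma mm {q : ℝ} (hq : 0 < q) (hq1 : q < 1) : 1 - q ∈ II :=
  ⟨by linarith, by linarith⟩

private lemma F_mid {q : ℝ} (hq : 0 < q) (hq1 : q < 1) {F : C(II, ℝ)}
    (hF : IsStationaryCumulative q F) : F ⟨1 - q, mm hq hq1⟩ = q := by
  have h1q : (0:ℝ) < 1 - q := by linarith
  have heq : (1 - q) / (1 - q) = 1 := div_self h1q.ne'
  have h2 : (1 - q) / (1 - q) ∈ II := by rw [heq]; exact m1
  have e := hF.1 (1 - q) (mm hq hq1) le_rfl h2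
  rw [happ F h2 m1 heq, F_one hq hq1 hF] at e
  simpa using e

/-- Existence of a solution of the generalized Takagi equations, via Banach fixed point. -/
private lemma genTakagi_exists {q : ℝ} (hq : 0 < q) (hq1 : q < 1) (F : C(II, ℝ))
    (hF : IsStationaryCumulative q F) : ∃ T : C(II, ℝ), IsGenTakagi q F T := by
  have h1q : (0:ℝ) < 1 - q := by linarith
  set z0 : II := ⟨0, m0⟩ with hz0
  set z1 : II := ⟨1, m1⟩ with hz1
  set p1 : II → II := fun x => Set.projIcc 0 1 zero_le_one ((x : ℝ) / (1 - q)) with hp1def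
  set p2 : II → II := fun x => Set.projIcc 0 1 zero_le_one (((x : ℝ) - (1 - q)) / q) with hp2def
  have hp1c : Continuous p1 := continuous_projIcc.comp (continuous_subtype_val.div_const _)
  have hp2c : Continuous p2 :=
    continuous_projIcc.comp ((continuous_subtype_val.sub continuous_const).div_const _)
  have hp1mem : ∀ (y : ℝ) (h1 : y ∈ II) (h2 : y / (1 - q) ∈ II),
      p1 ⟨y, h1⟩ = ⟨y / (1 - q), h2⟩ := fun y h1 h2 => Set.projIcc_of_mem _ h2
  have hp2mem : ∀ (y : ℝ) (h1 : y ∈ II) (h2 : (y - (1 - q)) / q ∈ II),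
      p2 ⟨y, h1⟩ = ⟨(y - (1 - q)) / q, h2⟩ := fun y h1 h2 => Set.projIcc_of_mem _ h2
  have hp1one : ∀ (h1 : (1 - q) ∈ II), p1 ⟨1 - q, h1⟩ = z1 := by
    intro h1
    have heq : (1 - q) / (1 - q) = 1 := div_self h1q.ne'
    have h2 : (1 - q) / (1 - q) ∈ II := by rw [heq]; exact m1
    rw [hp1mem _ h1 h2]; exact Subtype.ext heq
  have hp2zero : ∀ (h1 : (1 - q) ∈ II), p2 ⟨1 - q, h1⟩ = z0 := by
    intro h1
    have heq : ((1 - q) - (1 - q)) / q = 0 := by rw [sub_self, zero_div]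
    have h2 : ((1 - q) - (1 - q)) / q ∈ II := by rw [heq]; exact m0
    rw [hp2mem _ h1 h2]; exact Subtype.ext heq
  -- the subset of continuous maps vanishing at the endpoints
  set X : Set C(II, ℝ) := {T | T z0 = 0 ∧ T z1 = 0} with hX
  have hXc : IsClosed X :=
    IsClosed.inter (isClosed_eq (ContinuousEvalConst.continuous_eval_const z0) continuous_const)
      (isClosed_eq (ContinuousEvalConst.continuous_eval_const z1) continuous_const)
  haveI : CompleteSpace X := hXc.completeSpace_coe
  haveI : Nonempty X := ⟨⟨0, by simp [hX], by simp [hX]⟩⟩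
  -- the contraction
  have hbody : ∀ T : X, Continuous (fun x : II =>
      if (x : ℝ) ≤ 1 - q then 2 * (1 - q) * F x + q * T.1 (p1 x)
      else 2 * q * (1 - F x) + (1 - q) * T.1 (p2 x)) := by
    intro T
    apply Continuous.if_le
    · exact (continuous_const.mul F.continuous).add
        (continuous_const.mul (T.1.continuous.comp hp1c))
    · exact (continuous_const.mul (continuous_const.sub F.continuous)).add
        (continuous_const.mul (T.1.continuous.comp hp2c))
    · exact continuous_subtype_val
    · exact continuous_const
    · rintro ⟨y, hy⟩ hxeq
      simp only at hxeq
      subst hxeq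
      rw [hp1one hy, hp2zero hy, T.2.1, T.2.2]
      have : F ⟨1 - q, hy⟩ = q := F_mid hq hq1 hF
      rw [this]; ring
  set Φ : X → X := fun T =>
    ⟨⟨fun x => if (x : ℝ) ≤ 1 - q then 2 * (1 - q) * F x + q * T.1 (p1 x)
        else 2 * q * (1 - F x) + (1 - q) * T.1 (p2 x), hbody T⟩, by
      constructor
      · show (if ((z0 : ℝ) ≤ 1 - q) then _ else _) = (0:ℝ)
        rw [if_pos (show ((z0:ℝ)) ≤ 1 - q from by show (0:ℝ) ≤ 1 - q; linarith)]
        have hF0 : F z0 = 0 := F_zero hq hq1 hF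
        have heq : (0:ℝ) / (1 - q) = 0 := zero_div _
        have h2 : (0:ℝ) / (1 - q) ∈ II := by rw [heq]; exact m0
        have hp : p1 z0 = z0 := by rw [hz0, hp1mem 0 m0 h2]; exact Subtype.ext heq
        rw [hp, T.2.1, hF0]; ring
      · show (if ((z1 : ℝ) ≤ 1 - q) then _ else _) = (0:ℝ)
        rw [if_neg (show ¬((z1:ℝ)) ≤ 1 - q from by show ¬(1:ℝ) ≤ 1 - q; push_neg; linarith)]
        have hF1 : F z1 = 1 := F_one hq hq1 hF
        have heq : ((1:ℝ) - (1 - q)) / q = 1 := by field_simp; ring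
        have h2 : ((1:ℝ) - (1 - q)) / q ∈ II := by rw [heq]; exact m1
        have hp : p2 z1 = z1 := by rw [hz1, hp2mem 1 m1 h2]; exact Subtype.ext heq
        rw [hp, T.2.2, hF1]; ring⟩ with hΦ
  have hΦapp : ∀ (T : X) (x : II), (Φ T).1 x =
      if (x : ℝ) ≤ 1 - q then 2 * (1 - q) * F x + q * T.1 (p1 x)
      else 2 * q * (1 - F x) + (1 - q) * T.1 (p2 x) := fun T x => rfl
  have hc0 : (0:ℝ) ≤ max q (1 - q) := le_trans hq.le (le_max_left _ _)
  set K : NNReal := ⟨max q (1 - q), hc0⟩ with hK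
  have hK1 : K < 1 := by
    rw [← NNReal.coe_lt_coe]
    push_cast
    exact max_lt hq1 (by linarith)
  have hlip : ∀ T T' : X, dist (Φ T) (Φ T') ≤ (K : ℝ) * dist T T' := by
    intro T T'
    rw [Subtype.dist_eq]
    refine (ContinuousMap.dist_le (mul_nonneg hc0 dist_nonneg)).mpr fun x => ?_
    rw [hΦapp, hΦapp]
    by_cases hx : (x : ℝ) ≤ 1 - q
    · rw [if_pos hx, if_pos hx, Real.dist_eq]
      have : 2 * (1 - q) * F x + q * T.1 (p1 x) - (2 * (1 - q) * F x + q * T'.1 (p1 x))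
          = q * (T.1 (p1 x) - T'.1 (p1 x)) := by ring
      rw [this, abs_mul, abs_of_pos hq]
      have h1 : |T.1 (p1 x) - T'.1 (p1 x)| ≤ dist T T' := by
        rw [← Real.dist_eq, Subtype.dist_eq]
        exact ContinuousMap.dist_apply_le_dist _
      calc q * |T.1 (p1 x) - T'.1 (p1 x)| ≤ q * dist T T' :=
            mul_le_mul_of_nonneg_left h1 hq.le
        _ ≤ (K : ℝ) * dist T T' :=
            mul_le_mul_of_nonneg_right (le_max_left _ _) dist_nonneg
    · rw [if_neg hx, if_neg hx, Real.dist_eq]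
      have : 2 * q * (1 - F x) + (1 - q) * T.1 (p2 x)
          - (2 * q * (1 - F x) + (1 - q) * T'.1 (p2 x))
          = (1 - q) * (T.1 (p2 x) - T'.1 (p2 x)) := by ring
      rw [this, abs_mul, abs_of_pos h1q]
      have h1 : |T.1 (p2 x) - T'.1 (p2 x)| ≤ dist T T' := by
        rw [← Real.dist_eq, Subtype.dist_eq]
        exact ContinuousMap.dist_apply_le_dist _
      calc (1 - q) * |T.1 (p2 x) - T'.1 (p2 x)| ≤ (1 - q) * dist T T' :=
            mul_le_mul_of_nonneg_left h1 h1q.le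
        _ ≤ (K : ℝ) * dist T T' :=
            mul_le_mul_of_nonneg_right (le_max_right _ _) dist_nonneg
  have hcontr : ContractingWith K Φ :=
    ⟨hK1, LipschitzWith.of_dist_le_mul fun T T' => hlip T T'⟩
  set Tf : X := ContractingWith.fixedPoint Φ hcontr with hTf
  have hfix : Φ Tf = Tf := hcontr.fixedPoint_isFixedPt
  refine ⟨Tf.1, fun y hy hle h2 => ?_, fun y hy hge h2 => ?_⟩
  · have e := hΦapp Tf ⟨y, hy⟩
    rw [hfix, if_pos hle, hp1mem y hy h2] at e
    exact e
  · have e := hΦapp Tf ⟨y, hy⟩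
    rw [hfix] at e
    by_cases hle : y ≤ 1 - q
    · have hy' : y = 1 - q := le_antisymm hle hge
      subst hy'
      rw [if_pos hle, hp1one hy, Tf.2.2] at e
      have heq : ((1 - q) - (1 - q)) / q = 0 := by rw [sub_self, zero_div]
      have hFm : F ⟨1 - q, hy⟩ = q := F_mid hq hq1 hF
      rw [e, hFm, happ Tf.1 h2 m0 heq]
      have h0 : Tf.1 ⟨(0:ℝ), m0⟩ = 0 := Tf.2.1
      rw [h0]; ring
    · rw [if_neg hle, hp2mem y hy h2] at e
      exact e

/-- The reflection `y ↦ 1 - y` of the unit interval, as a continuous map. -/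
private def refl01 : C(II, II) :=
  ⟨fun x => ⟨1 - x.1, mem_refl x.2⟩,
    Continuous.subtype_mk (continuous_const.sub continuous_subtype_val) _⟩

private lemma refl01_apply (y : ℝ) (h : y ∈ II) (h' : 1 - y ∈ II) :
    refl01 ⟨y, h⟩ = ⟨1 - y, h'⟩ := rfl

/-- The reflected stationary cumulative function with parameter `1 - q` satisfies the
stationary equations with parameter `q`. -/
private lemma stationary_reflect {q : ℝ} (hq : 0 < q) (hq1 : q < 1)
    {Fq F' : C(II, ℝ)} (hFq : IsStationaryCumulative q Fq)
    (hF' : IsStationaryCumulative (1 - q) F') :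
    ∀ (y : ℝ) (h : y ∈ II) (h' : 1 - y ∈ II), Fq ⟨y, h⟩ = 1 - F' ⟨1 - y, h'⟩ := by
  have h1q : (0:ℝ) < 1 - q := by linarith
  set G : C(II, ℝ) := ContinuousMap.const II 1 - F'.comp refl01 with hGdef
  have hGapp : ∀ (y : ℝ) (h : y ∈ II) (h' : 1 - y ∈ II),
      G ⟨y, h⟩ = 1 - F' ⟨1 - y, h'⟩ := fun y h h' => rfl
  have hG : IsStationaryCumulative q G := by
    constructor
    · intro y h1 hle h2
      have h' : 1 - y ∈ II := mem_refl h1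
      have h2' : 1 - y / (1 - q) ∈ II := mem_refl h2
      rw [hGapp y h1 h', hGapp _ h2 h2']
      have heq : (1 - y - (1 - (1 - q))) / (1 - q) = 1 - y / (1 - q) := by
        field_simp; ring
      have hh2 : (1 - y - (1 - (1 - q))) / (1 - q) ∈ II := by rw [heq]; exact h2'
      have e := hF'.2 (1 - y) h' (by linarith) hh2
      rw [happ F' hh2 h2' heq] at e
      rw [e]; ring
    · intro y h1 hge h2
      have h' : 1 - y ∈ II := mem_refl h1
      have h2' : 1 - (y - (1 - q)) / q ∈ II := mem_refl h2
      rw [hGapp y h1 h', hGapp _ h2 h2']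
      have heq : (1 - y) / (1 - (1 - q)) = 1 - (y - (1 - q)) / q := by
        rw [show (1:ℝ) - (1 - q) = q by ring]
        field_simp; ring
      have hh2 : (1 - y) / (1 - (1 - q)) ∈ II := by rw [heq]; exact h2'
      have e := hF'.1 (1 - y) h' (by linarith) hh2
      rw [happ F' hh2 h2' heq] at e
      rw [e]; ring
  have hFG : Fq = G := stationary_unique hq hq1 hFq hG
  intro y h h'
  rw [hFG]; exact hGapp y h h'

/-- The reflection of a solution of the generalized Takagi equations with parameter
`1 - q` solves the generalized Takagi equations with parameter `q`. -/
private lemma genTakagi_reflect {q : ℝ} (hq : 0 < q) (hq1 : q < 1)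
    {Fq F' T' : C(II, ℝ)} (hFq : IsStationaryCumulative q Fq)
    (hF' : IsStationaryCumulative (1 - q) F')
    (hT' : IsGenTakagi (1 - q) F' T') :
    IsGenTakagi q Fq (T'.comp refl01) := by
  have h1q : (0:ℝ) < 1 - q := by linarith
  have hSapp : ∀ (y : ℝ) (h : y ∈ II) (h' : 1 - y ∈ II),
      (T'.comp refl01) ⟨y, h⟩ = T' ⟨1 - y, h'⟩ := fun y h h' => rfl
  have hFrefl := stationary_reflect hq hq1 hFq hF'
  constructor
  · intro y h1 hle h2
    have h' : 1 - y ∈ II := mem_refl h1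
    have h2' : 1 - y / (1 - q) ∈ II := mem_refl h2
    rw [hSapp y h1 h', hSapp _ h2 h2']
    have heq : (1 - y - (1 - (1 - q))) / (1 - q) = 1 - y / (1 - q) := by
      field_simp; ring
    have hh2 : (1 - y - (1 - (1 - q))) / (1 - q) ∈ II := by rw [heq]; exact h2'
    have e := hT'.2 (1 - y) h' (by linarith) hh2
    rw [happ T' hh2 h2' heq] at e
    rw [e, hFrefl y h1 h']; ring
  · intro y h1 hge h2
    have h' : 1 - y ∈ II := mem_refl h1
    have h2' : 1 - (y - (1 - q)) / q ∈ II := mem_refl h2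
    rw [hSapp y h1 h', hSapp _ h2 h2']
    have heq : (1 - y) / (1 - (1 - q)) = 1 - (y - (1 - q)) / q := by
      rw [show (1:ℝ) - (1 - q) = q by ring]
      field_simp; ring
    have hh2 : (1 - y) / (1 - (1 - q)) ∈ II := by rw [heq]; exact h2'
    have e := hT'.1 (1 - y) h' (by linarith) hh2
    rw [happ T' hh2 h2' heq] at e
    rw [e, hFrefl y h1 h']; ring

/-- For every `q ∈ (0,1)`, with `F_q` the unique continuous solution of the stationary
functional equations, there exists a unique continuous `T_q : [0,1] → ℝ` satisfying the
generalized Takagi equation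
`T_q(y) = 2(1-q) F_q(y) + q T_q(y/(1-q))` on `[0,1-q]` and
`T_q(y) = 2q (1 - F_q(y)) + (1-q) T_q((y-(1-q))/q)` on `[1-q,1]`; moreover the family
satisfies the symmetry `T_q(y) = T_{1-q}(1-y)` for all `y ∈ [0,1]`. -/
theorem genTakagi_existsUnique_and_symm (F : ℝ → C(Set.Icc (0 : ℝ) 1, ℝ))
    (hF : ∀ q ∈ Set.Ioo (0 : ℝ) 1, IsStationaryCumulative q (F q)) :
    ∀ q ∈ Set.Ioo (0 : ℝ) 1,
      (∃! T : C(Set.Icc (0 : ℝ) 1, ℝ), IsGenTakagi q (F q) T) ∧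
      (∀ T T' : C(Set.Icc (0 : ℝ) 1, ℝ),
        IsGenTakagi q (F q) T → IsGenTakagi (1 - q) (F (1 - q)) T' →
        ∀ (y : ℝ) (h : y ∈ Set.Icc (0 : ℝ) 1) (h' : 1 - y ∈ Set.Icc (0 : ℝ) 1),
          T ⟨y, h⟩ = T' ⟨1 - y, h'⟩) := by
  rintro q ⟨hq0, hq1⟩
  have hFq := hF q ⟨hq0, hq1⟩
  have hFq' := hF (1 - q) ⟨by linarith, by linarith⟩
  constructor
  · obtain ⟨T, hT⟩ := genTakagi_exists hq0 hq1 (F q) hFq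
    exact ⟨T, hT, fun T' hT' => genTakagi_unique hq0 hq1 hT' hT⟩
  · intro T T' hT hT' y h h'
    have hS : IsGenTakagi q (F q) (T'.comp refl01) :=
      genTakagi_reflect hq0 hq1 hFq hFq' hT'
    have hTS : T = T'.comp refl01 := genTakagi_unique hq0 hq1 hT hS
    rw [hTS]
    rfl
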